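/- Let Ω ⊂ ℝ^n be a bounded smooth domain, and for functions f, g on ∂Ω let f_H, g_H denote their harmonic extensions to Ω and N the Dirichlet-Neumann operator N(f) = ∂_ν f_H. Then N(fg) = f N(g) + g N(f) - 2 ∂_ν Δ^{-1}(∇f_H · ∇g_H), where Δ^{-1} is the inverse Dirichlet Laplacian on Ω and ∂_ν is the outward normal derivative. -/

import Mathlib

open scoped RealInnerProductSpace

/-- The Euclidean Laplacian `Δu = ∑ ∂²u/∂xᵢ²` on `ℝⁿ`. -/
noncomputable def eucLap {n : ℕ} (u : EuclideanSpace ℝ (Fin n) → ℝ)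
    (x : EuclideanSpace ℝ (Fin n)) : ℝ :=
  ∑ i, fderiv ℝ (fun z => fderiv ℝ u z (EuclideanSpace.single i 1)) x
    (EuclideanSpace.single i 1)

open scoped Topology ContDiff

section helpers
variable {n : ℕ}
local notation "E" => EuclideanSpace ℝ (Fin n)
lemma cd_fderiv_apply {f : E → ℝ} (hf : ContDiff ℝ (⊤ : ℕ∞) f) (v : E) :
    ContDiff ℝ (⊤ : ℕ∞) (fun x => fderiv ℝ f x v) :=
  (hf.fderiv_right ((by simp))).clm_apply contDiff_const
lemma diffAt {f : E → ℝ} (hf : ContDiff ℝ (⊤ : ℕ∞) f) (x : E) : DifferentiableAt ℝ f x :=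
  (hf.differentiable (by simp)) x

lemma eucLap_sub {f g : E → ℝ} (hf : ContDiff ℝ (⊤ : ℕ∞) f) (hg : ContDiff ℝ (⊤ : ℕ∞) g) (y : E) :
    eucLap (fun x => f x - g x) y = eucLap f y - eucLap g y := by
  unfold eucLap
  rw [← Finset.sum_sub_distrib]
  refine Finset.sum_congr rfl fun i _ => ?_
  have h1 : (fun z => fderiv ℝ (fun x => f x - g x) z (EuclideanSpace.single i 1))
      = fun z => fderiv ℝ f z (EuclideanSpace.single i 1)
        - fderiv ℝ g z (EuclideanSpace.single i 1) := by
    funext z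
    rw [fderiv_fun_sub (diffAt hf z) (diffAt hg z)]; simp
  rw [h1, fderiv_fun_sub (diffAt (cd_fderiv_apply hf _) y) (diffAt (cd_fderiv_apply hg _) y)]
  simp

lemma eucLap_const_mul {f : E → ℝ} (hf : ContDiff ℝ (⊤ : ℕ∞) f) (c : ℝ) (y : E) :
    eucLap (fun x => c * f x) y = c * eucLap f y := by
  unfold eucLap
  rw [Finset.mul_sum]
  refine Finset.sum_congr rfl fun i _ => ?_
  have h1 : (fun z => fderiv ℝ (fun x => c * f x) z (EuclideanSpace.single i 1))
      = fun z => c * fderiv ℝ f z (EuclideanSpace.single i 1) := by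
    funext z
    rw [fderiv_const_mul (diffAt hf z)]; simp
  rw [h1, fderiv_const_mul (diffAt (cd_fderiv_apply hf _) y)]
  simp

lemma eucLap_mul {f g : E → ℝ} (hf : ContDiff ℝ (⊤ : ℕ∞) f) (hg : ContDiff ℝ (⊤ : ℕ∞) g) (y : E) :
    eucLap (fun x => f x * g x) y
      = f y * eucLap g y + g y * eucLap f y
        + 2 * ∑ i, fderiv ℝ f y (EuclideanSpace.single i 1)
            * fderiv ℝ g y (EuclideanSpace.single i 1) := by
  unfold eucLap
  have key : ∀ i : Fin n,
      fderiv ℝ (fun z => fderiv ℝ (fun x => f x * g x) z (EuclideanSpace.single i 1)) y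
        (EuclideanSpace.single i 1)
      = f y * fderiv ℝ (fun z => fderiv ℝ g z (EuclideanSpace.single i 1)) y
            (EuclideanSpace.single i 1)
        + g y * fderiv ℝ (fun z => fderiv ℝ f z (EuclideanSpace.single i 1)) y
            (EuclideanSpace.single i 1)
        + 2 * (fderiv ℝ f y (EuclideanSpace.single i 1)
            * fderiv ℝ g y (EuclideanSpace.single i 1)) := by
    intro i
    set e := EuclideanSpace.single i (1:ℝ)
    have h1 : (fun z => fderiv ℝ (fun x => f x * g x) z e)
        = fun z => f z * fderiv ℝ g z e + g z * fderiv ℝ f z e := by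
      funext z
      rw [fderiv_fun_mul (diffAt hf z) (diffAt hg z)]; simp
    rw [h1, fderiv_fun_add (f := fun z => f z * fderiv ℝ g z e) (g := fun z => g z * fderiv ℝ f z e) ((diffAt hf y).mul (diffAt (cd_fderiv_apply hg e) y))
      ((diffAt hg y).mul (diffAt (cd_fderiv_apply hf e) y))]
    rw [ContinuousLinearMap.add_apply,
      fderiv_fun_mul (diffAt hf y) (diffAt (cd_fderiv_apply hg e) y),
      fderiv_fun_mul (diffAt hg y) (diffAt (cd_fderiv_apply hf e) y)]
    simp
    ring
  rw [Finset.sum_congr rfl fun i _ => key i]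
  rw [Finset.sum_add_distrib, Finset.sum_add_distrib, ← Finset.mul_sum, ← Finset.mul_sum,
    ← Finset.mul_sum]

lemma inner_gradient_eq {f g : E → ℝ} (hf : ContDiff ℝ (⊤ : ℕ∞) f) (hg : ContDiff ℝ (⊤ : ℕ∞) g) (x : E) :
    ⟪gradient f x, gradient g x⟫
      = ∑ i, fderiv ℝ f x (EuclideanSpace.single i 1)
          * fderiv ℝ g x (EuclideanSpace.single i 1) := by
  have b := EuclideanSpace.basisFun (Fin n) ℝ
  rw [← (EuclideanSpace.basisFun (Fin n) ℝ).sum_inner_mul_inner (gradient f x) (gradient g x)]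
  refine Finset.sum_congr rfl fun i _ => ?_
  have hb : (EuclideanSpace.basisFun (Fin n) ℝ) i = EuclideanSpace.single i 1 := by
    simp [EuclideanSpace.basisFun_apply]
  rw [hb, real_inner_comm (gradient g x) (EuclideanSpace.single i 1)]
  rw [gradient, gradient, InnerProductSpace.toDual_symm_apply, InnerProductSpace.toDual_symm_apply]
lemma eucLap_add {f g : E → ℝ} (hf : ContDiff ℝ (⊤ : ℕ∞) f) (hg : ContDiff ℝ (⊤ : ℕ∞) g) (y : E) :
    eucLap (fun x => f x + g x) y = eucLap f y + eucLap g y := by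
  unfold eucLap
  rw [← Finset.sum_add_distrib]
  refine Finset.sum_congr rfl fun i _ => ?_
  have h1 : (fun z => fderiv ℝ (fun x => f x + g x) z (EuclideanSpace.single i 1))
      = fun z => fderiv ℝ f z (EuclideanSpace.single i 1)
        + fderiv ℝ g z (EuclideanSpace.single i 1) := by
    funext z
    rw [fderiv_fun_add (diffAt hf z) (diffAt hg z)]
    simp
  rw [h1, fderiv_fun_add (diffAt (cd_fderiv_apply hf _) y) (diffAt (cd_fderiv_apply hg _) y)]
  simp

end helpers


lemma second_deriv_test_max {φ : ℝ → ℝ} (hφ : ContDiff ℝ (⊤ : ℕ∞) φ) (hmax : IsLocalMax φ 0) :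
    deriv (deriv φ) 0 ≤ 0 := by
  by_contra hpos
  push_neg at hpos
  have hφ' : ContDiff ℝ ∞ φ := hφ.of_le (by simp)
  have hd1 : Differentiable ℝ φ := hφ.differentiable (by simp)
  have hdφ : ContDiff ℝ ∞ (deriv φ) := (contDiff_infty_iff_deriv.mp hφ').2
  have hd2 : Differentiable ℝ (deriv φ) := hdφ.differentiable (by simp)
  have h0 : deriv φ 0 = 0 := hmax.deriv_eq_zero
  -- deriv φ is positive on a right neighborhood of 0
  have hda : HasDerivAt (deriv φ) (deriv (deriv φ) 0) 0 := (hd2 0).hasDerivAt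
  rw [hasDerivAt_iff_tendsto_slope] at hda
  have hev : ∀ᶠ t in 𝓝[>] (0:ℝ), 0 < slope (deriv φ) 0 t := by
    have : ∀ᶠ t in 𝓝[≠] (0:ℝ), 0 < slope (deriv φ) 0 t :=
      hda (Ioi_mem_nhds hpos)
    exact this.filter_mono (nhdsWithin_mono _ fun t ht => ne_of_gt ht)
  have hev2 : ∀ᶠ t in 𝓝[>] (0:ℝ), 0 < deriv φ t := by
    filter_upwards [hev, self_mem_nhdsWithin] with t ht ht'
    have : slope (deriv φ) 0 t = deriv φ t / t := by
      simp [slope_def_field, h0, div_eq_inv_mul]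
    rw [this] at ht
    have htpos : (0:ℝ) < t := ht'
    nlinarith [mul_pos ht htpos, div_mul_cancel₀ (deriv φ t) (ne_of_gt htpos)]
  obtain ⟨δ, hδ, hIoo⟩ := (nhdsGT_basis (0:ℝ)).eventually_iff.mp hev2
  -- φ is strictly monotone on [0, δ/2]... use Icc 0 δ with deriv pos on interior
  have hmono : StrictMonoOn φ (Set.Icc 0 δ) := by
    apply strictMonoOn_of_deriv_pos (convex_Icc _ _) hd1.continuous.continuousOn
    intro t ht
    rw [interior_Icc] at ht
    exact hIoo ⟨ht.1, ht.2⟩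
  obtain ⟨δ₂, hδ₂, hball⟩ := Metric.eventually_nhds_iff.mp hmax
  set t := min δ δ₂ / 2 with htdef
  have htpos : 0 < t := by positivity
  have ht1 : t ≤ δ / 2 := by
    rw [htdef]
    apply div_le_div_of_nonneg_right ?_ (by norm_num)
    · exact min_le_left _ _
  have ht2 : t < δ₂ := by
    have : t ≤ δ₂ / 2 := by
      rw [htdef]
      exact div_le_div_of_nonneg_right (min_le_right _ _) (by norm_num)
    linarith
  have h1 : φ 0 < φ t :=
    hmono (Set.left_mem_Icc.mpr (le_of_lt hδ))
      ⟨le_of_lt htpos, by linarith⟩ htpos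
  have h2 : φ t ≤ φ 0 := hball (by simp [abs_of_pos htpos, Real.dist_eq]; linarith)
  linarith


section
variable {n : ℕ}
local notation "E" => EuclideanSpace ℝ (Fin n)

lemma diffAt' {f : E → ℝ} (hf : ContDiff ℝ (⊤ : ℕ∞) f) (x : E) : DifferentiableAt ℝ f x :=
  (hf.differentiable (by simp)) x
lemma cd_fderiv_apply' {f : E → ℝ} (hf : ContDiff ℝ (⊤ : ℕ∞) f) (v : E) :
    ContDiff ℝ (⊤ : ℕ∞) (fun x => fderiv ℝ f x v) :=
  (hf.fderiv_right ((by simp))).clm_apply contDiff_const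

lemma line_second_deriv {v : E → ℝ} (hv : ContDiff ℝ (⊤ : ℕ∞) v) (z : E) (e : E) :
    deriv (deriv (fun t : ℝ => v (z + t • e))) 0
      = fderiv ℝ (fun y => fderiv ℝ v y e) z e := by
  have hψ : ∀ t : ℝ, HasDerivAt (fun s : ℝ => z + s • e) e t := by
    intro t
    simpa using ((hasDerivAt_id t).smul_const e).const_add z
  have h1 : deriv (fun t : ℝ => v (z + t • e))
      = fun t => fderiv ℝ v (z + t • e) e := by
    funext t
    exact (((diffAt' hv _).hasFDerivAt).comp_hasDerivAt t (hψ t)).deriv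
  rw [h1]
  have h2 : HasDerivAt (fun t : ℝ => fderiv ℝ v (z + t • e) e)
      (fderiv ℝ (fun y => fderiv ℝ v y e) z e) 0 := by
    have hD := (diffAt' (cd_fderiv_apply' hv e) (z + (0:ℝ) • e)).hasFDerivAt
    have := hD.comp_hasDerivAt 0 (hψ 0)
    simp only [zero_smul, add_zero] at this; exact this
  exact h2.deriv

lemma contDiff_line {v : E → ℝ} (hv : ContDiff ℝ (⊤ : ℕ∞) v) (z e : E) :
    ContDiff ℝ (⊤ : ℕ∞) (fun t : ℝ => v (z + t • e)) :=
  hv.comp (contDiff_const.add (contDiff_id.smul contDiff_const))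

lemma eucLap_nonpos_of_localMax {v : E → ℝ} (hv : ContDiff ℝ (⊤ : ℕ∞) v) {z : E}
    (hmax : IsLocalMax v z) : eucLap v z ≤ 0 := by
  apply Finset.sum_nonpos
  intro i _
  rw [← line_second_deriv hv z (EuclideanSpace.single i 1)]
  apply second_deriv_test_max (contDiff_line hv _ _)
  have h0 : (fun t : ℝ => z + t • EuclideanSpace.single i (1:ℝ)) 0 = z := by simp
  have hmax' : IsLocalMax v ((fun t : ℝ => z + t • EuclideanSpace.single i (1:ℝ)) 0) := by
    rw [h0]; exact hmax
  exact IsLocalMax.comp_continuous hmax'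
    (continuous_const.add (continuous_id.smul continuous_const)).continuousAt

lemma eucLap_sq_coord (hn : 0 < n) (y : E) :
    eucLap (fun x : E => x ⟨0, hn⟩ * x ⟨0, hn⟩) y = 2 := by
  set i₀ : Fin n := ⟨0, hn⟩
  have hproj : (fun x : E => x i₀) = (EuclideanSpace.proj i₀ : E →L[ℝ] ℝ) := rfl
  have hd : ∀ x : E, DifferentiableAt ℝ (fun x : E => x i₀) x := by
    rw [hproj]; exact fun x => (EuclideanSpace.proj i₀ : EuclideanSpace ℝ (Fin n) →L[ℝ] ℝ).differentiableAt
  have hfd : ∀ z : E, fderiv ℝ (fun x : E => x i₀ * x i₀) z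
      = z i₀ • (EuclideanSpace.proj i₀ : E →L[ℝ] ℝ)
        + z i₀ • (EuclideanSpace.proj i₀ : E →L[ℝ] ℝ) := by
    intro z
    rw [fderiv_fun_mul (hd z) (hd z)]
    congr 1 <;> rw [hproj] <;> rw [(EuclideanSpace.proj i₀ : EuclideanSpace ℝ (Fin n) →L[ℝ] ℝ).fderiv]
  unfold eucLap
  have key : ∀ i : Fin n,
      fderiv ℝ (fun z => fderiv ℝ (fun x : E => x i₀ * x i₀) z (EuclideanSpace.single i 1)) y
        (EuclideanSpace.single i 1)
      = 2 * (EuclideanSpace.single i (1:ℝ) i₀ * EuclideanSpace.single i (1:ℝ) i₀) := by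
    intro i
    have h1 : (fun z => fderiv ℝ (fun x : E => x i₀ * x i₀) z (EuclideanSpace.single i 1))
        = fun z => (2 * EuclideanSpace.single i (1:ℝ) i₀) * z i₀ := by
      funext z
      rw [hfd z]
      simp [EuclideanSpace.single_apply]
      split_ifs <;> ring
    rw [h1]
    have : (fun z : E => (2 * EuclideanSpace.single i (1:ℝ) i₀) * z i₀)
        = fun z : E => (2 * EuclideanSpace.single i (1:ℝ) i₀) * (EuclideanSpace.proj i₀ : E →L[ℝ] ℝ) z := rfl
    rw [this, fderiv_const_mul ((EuclideanSpace.proj i₀ : EuclideanSpace ℝ (Fin n) →L[ℝ] ℝ).differentiableAt)]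
    rw [(EuclideanSpace.proj i₀ : EuclideanSpace ℝ (Fin n) →L[ℝ] ℝ).fderiv]
    simp [EuclideanSpace.single_apply]
    split_ifs with h <;> simp [h]
  rw [Finset.sum_congr rfl fun i _ => key i]
  have : ∀ i : Fin n, EuclideanSpace.single i (1:ℝ) i₀ * EuclideanSpace.single i (1:ℝ) i₀
      = if i = i₀ then 1 else 0 := by
    intro i
    rw [EuclideanSpace.single_apply]
    by_cases h : i = i₀ <;> simp [h, Ne.symm]
    
  rw [Finset.sum_congr rfl fun i _ => by rw [this i]]
  rw [← Finset.mul_sum]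
  simp
end

section maxp
variable {n : ℕ}
local notation "E" => EuclideanSpace ℝ (Fin n)

lemma eucLap_max_principle (hn : 0 < n) {Ω : Set (EuclideanSpace ℝ (Fin n))}
    (hΩo : IsOpen Ω) (hΩb : Bornology.IsBounded Ω)
    {h : EuclideanSpace ℝ (Fin n) → ℝ} (hh : ContDiff ℝ (⊤ : ℕ∞) h)
    (hL : ∀ x ∈ Ω, eucLap h x = 0) (hbd : ∀ x ∈ frontier Ω, h x = 0) :
    ∀ x ∈ Ω, h x ≤ 0 := by
  intro x₀ hx₀
  set i₀ : Fin n := ⟨0, hn⟩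
  set q : E → ℝ := fun x => x i₀ * x i₀ with hq
  have hqc : ContDiff ℝ (⊤ : ℕ∞) q := by
    have : ContDiff ℝ (⊤ : ℕ∞) (fun x : E => x i₀) :=
      (EuclideanSpace.proj i₀ : E →L[ℝ] ℝ).contDiff
    exact this.mul this
  have hK : IsCompact (closure Ω) :=
    Metric.isCompact_of_isClosed_isBounded isClosed_closure hΩb.closure
  have hKne : (closure Ω).Nonempty := ⟨x₀, subset_closure hx₀⟩
  obtain ⟨zq, hzqK, hzq⟩ := hK.exists_isMaxOn hKne (hqc.continuous).continuousOn
  set C : ℝ := q zq with hC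
  have hC0 : 0 ≤ C := le_trans (mul_self_nonneg _) (hzq (subset_closure hx₀))
  have key : ∀ ε : ℝ, 0 < ε → h x₀ ≤ ε * C := by
    intro ε hε
    set v : E → ℝ := fun y => h y + ε * q y with hv
    have hvc : ContDiff ℝ (⊤ : ℕ∞) v := hh.add (contDiff_const.mul hqc)
    obtain ⟨z, hzK, hz⟩ := hK.exists_isMaxOn hKne (hvc.continuous).continuousOn
    by_cases hzΩ : z ∈ Ω
    · exfalso
      have hloc : IsLocalMax v z :=
        hz.isLocalMax (Filter.mem_of_superset (hΩo.mem_nhds hzΩ) subset_closure)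
      have h1 : eucLap v z ≤ 0 := eucLap_nonpos_of_localMax hvc hloc
      have h2 : eucLap v z = 2 * ε := by
        have heq := eucLap_add hh (g := fun y => ε * q y) (contDiff_const.mul hqc) z
        have h5 : eucLap v z = eucLap (fun y => h y + ε * q y) z := by rw [hv]
        rw [h5, heq, hL z hzΩ, eucLap_const_mul hqc ε z]
        have h6 : eucLap q z = 2 := eucLap_sq_coord hn z
        rw [h6]; ring
      linarith
    · have hzfr : z ∈ frontier Ω := by
        rw [frontier, hΩo.interior_eq]
        exact ⟨hzK, hzΩ⟩
      have hvz : v z = ε * q z := by rw [hv]; simp [hbd z hzfr]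
      have h3 : h x₀ + ε * q x₀ ≤ ε * q z := by
        have := hz (subset_closure hx₀)
        rw [hvz] at this
        exact this
      have h4 : ε * q z ≤ ε * C := by
        apply mul_le_mul_of_nonneg_left (hzq hzK) (le_of_lt hε)
      have hq0 : 0 ≤ q x₀ := mul_self_nonneg _
      have : 0 ≤ ε * q x₀ := mul_nonneg hε.le hq0
      linarith
  by_contra hcon
  push_neg at hcon
  have := key (h x₀ / (2 * (C + 1))) (by positivity)
  have hC1 : (0:ℝ) < C + 1 := by linarith
  rw [div_mul_eq_mul_div, mul_comm, le_div_iff₀ (by positivity : (0:ℝ) < 2 * (C + 1))] at this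
  nlinarith [mul_nonneg hC0 hcon.le]
end maxp

/-- Let `Ω ⊂ ℝⁿ` be a bounded smooth domain and, for functions `f, g` on
`∂Ω`, let `fH, gH` denote their harmonic extensions to `Ω` and `𝒩(f) = ∂_ν fH` the
Dirichlet-Neumann operator.  Then `𝒩(fg) = f 𝒩(g) + g 𝒩(f) - 2 ∂_ν Δ⁻¹(∇fH · ∇gH)`,
where `Δ⁻¹` is the inverse Dirichlet Laplacian on `Ω` and `∂_ν` the outward normal
derivative.  Here `w` is the harmonic extension of `fg` and `u = Δ⁻¹(∇fH · ∇gH)`. -/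
theorem stmt_9 {n : ℕ} (Ω : Set (EuclideanSpace ℝ (Fin n)))
    (hΩo : IsOpen Ω) (hΩb : Bornology.IsBounded Ω)
    (fH gH u w : EuclideanSpace ℝ (Fin n) → ℝ)
    (ν : EuclideanSpace ℝ (Fin n) → EuclideanSpace ℝ (Fin n))
    (hfH : ContDiff ℝ (⊤ : ℕ∞) fH) (hgH : ContDiff ℝ (⊤ : ℕ∞) gH)
    (hu : ContDiff ℝ (⊤ : ℕ∞) u) (hw : ContDiff ℝ (⊤ : ℕ∞) w)
    -- `ν` is the outward unit normal on `∂Ω`: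
    (hν : ∀ x ∈ frontier Ω, ‖ν x‖ = 1)
    (hνout : ∀ x ∈ frontier Ω, ∃ ε > 0, ∀ s : ℝ, 0 < s → s < ε → x + s • ν x ∉ closure Ω)
    -- `fH`, `gH` are harmonic in `Ω`:
    (hfharm : ∀ x ∈ Ω, eucLap fH x = 0)
    (hgharm : ∀ x ∈ Ω, eucLap gH x = 0)
    -- `u = Δ⁻¹(∇fH · ∇gH)`, i.e. `Δu = ∇fH · ∇gH` in `Ω`, `u = 0` on `∂Ω`:
    (hueq : ∀ x ∈ Ω, eucLap u x = ⟪gradient fH x, gradient gH x⟫)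
    (hubd : ∀ x ∈ frontier Ω, u x = 0)
    -- `w` is the harmonic extension of `fg`:
    (hwharm : ∀ x ∈ Ω, eucLap w x = 0)
    (hwbd : ∀ x ∈ frontier Ω, w x = fH x * gH x) :
    ∀ x ∈ frontier Ω,
      fderiv ℝ w x (ν x)
        = fH x * fderiv ℝ gH x (ν x) + gH x * fderiv ℝ fH x (ν x)
          - 2 * fderiv ℝ u x (ν x) := by
  intro x hx
  rcases Nat.eq_zero_or_pos n with hn0 | hn
  · -- degenerate case `n = 0`: the frontier is empty
    exfalso
    subst hn0
    haveI : Subsingleton (EuclideanSpace ℝ (Fin 0)) :=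
      ⟨fun a b => by ext i; exact absurd i.2 (by omega)⟩
    have : frontier Ω = ∅ := by
      rw [frontier, (isClosed_discrete Ω).closure_eq, (isOpen_discrete Ω).interior_eq,
        Set.diff_self]
    rw [this] at hx
    exact hx
  · set G : EuclideanSpace ℝ (Fin n) → ℝ := fun y => fH y * gH y - 2 * u y with hG
    have hGc : ContDiff ℝ (⊤ : ℕ∞) G := (hfH.mul hgH).sub (contDiff_const.mul hu)
    set h : EuclideanSpace ℝ (Fin n) → ℝ := fun y => w y - G y with hdef
    have hhc : ContDiff ℝ (⊤ : ℕ∞) h := hw.sub hGc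
    -- `h` is harmonic in `Ω`
    have hlap : ∀ y ∈ Ω, eucLap h y = 0 := by
      intro y hy
      have e1 : eucLap h y = eucLap w y - eucLap G y := eucLap_sub hw hGc y
      have e2 : eucLap G y
          = eucLap (fun x => fH x * gH x) y - eucLap (fun x => 2 * u x) y :=
        eucLap_sub (hfH.mul hgH) (contDiff_const.mul hu) y
      have e3 : eucLap (fun x => 2 * u x) y = 2 * eucLap u y := eucLap_const_mul hu 2 y
      have e4 := eucLap_mul hfH hgH y
      have e5 := hueq y hy
      rw [inner_gradient_eq hfH hgH y] at e5
      rw [e1, e2, e3, e4, hfharm y hy, hgharm y hy, hwharm y hy, e5]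
      ring
    -- `h` vanishes on the frontier
    have hbd0 : ∀ y ∈ frontier Ω, h y = 0 := by
      intro y hy
      have : h y = w y - (fH y * gH y - 2 * u y) := rfl
      rw [this, hwbd y hy, hubd y hy]
      ring
    -- maximum principle in both directions : `h = 0` on `Ω`
    have hpos := eucLap_max_principle hn hΩo hΩb hhc hlap hbd0
    have hneg : ∀ y ∈ Ω, -h y ≤ 0 := by
      have hmc : ContDiff ℝ (⊤ : ℕ∞) (fun y => (-1 : ℝ) * h y) := contDiff_const.mul hhc
      have := eucLap_max_principle hn hΩo hΩb hmc
        (fun y hy => by rw [eucLap_const_mul hhc (-1) y, hlap y hy]; ring)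
        (fun y hy => by rw [hbd0 y hy]; ring)
      intro y hy
      have h2 := this y hy
      linarith [h2]
    have hzero : ∀ y ∈ Ω, h y = 0 := fun y hy =>
      le_antisymm (hpos y hy) (by linarith [hneg y hy])
    -- the gradient of `h` vanishes on the closure of `Ω`
    have hfzero : ∀ y ∈ Ω, fderiv ℝ h y = 0 := by
      intro y hy
      have heq : h =ᶠ[nhds y] fun _ => (0:ℝ) := by
        filter_upwards [hΩo.mem_nhds hy] with z hz
        exact hzero z hz
      rw [heq.fderiv_eq, fderiv_fun_const]
      rfl
    have hcont : Continuous (fun y => fderiv ℝ h y) := hhc.continuous_fderiv (by simp)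
    have hclosuresub : closure Ω ⊆ {y | fderiv ℝ h y = 0} :=
      closure_minimal (fun y hy => hfzero y hy) (isClosed_eq hcont continuous_const)
    have hx0 : fderiv ℝ h x = 0 := hclosuresub (frontier_subset_closure hx)
    -- split `w = h + G` and differentiate
    have hwsplit : fderiv ℝ w x = fderiv ℝ h x + fderiv ℝ G x := by
      have : w = fun y => h y + G y := by funext y; simp [hdef]
      rw [this]
      exact fderiv_fun_add (diffAt hhc x) (diffAt hGc x)
    have hGd : fderiv ℝ G x
        = (fH x • fderiv ℝ gH x + gH x • fderiv ℝ fH x) - (2:ℝ) • fderiv ℝ u x := by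
      have : G = fun y => fH y * gH y - 2 * u y := rfl
      rw [this, fderiv_fun_sub (f := fun y => fH y * gH y) ((diffAt hfH x).mul (diffAt hgH x))
        ((diffAt hu x).const_mul 2), fderiv_fun_mul (diffAt hfH x) (diffAt hgH x),
        fderiv_const_mul (diffAt hu x)]
    rw [hwsplit, hx0]
    rw [ContinuousLinearMap.add_apply, hGd]
    simp
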